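/- Let S be a subset of R^2, let a = (ax,ay) and b = (bx,by) be points of S, and let h be a real number with h <= ay and h <= by. Assume: (i) the closed segments from a to (ax,h), from (ax,h) to (bx,h), and from (bx,h) to b are all contained in S; (ii) every path in S from a to b contains a point whose second coordinate is at most h. Then d_S(a,b) = |ax - bx| + (ay - h) + (by - h) (coerced into extended nonnegative reals). -/

import Mathlib

open Set

noncomputable section

/-- A path in `S` from `p` to `q`: continuous on `[0,1]`, with the prescribed endpoints,
and staying in `S` on `[0,1]`. The plane carries the `L1` metric via `WithLp 1 (ℝ × ℝ)`. -/
def IsPathIn (S : Set (WithLp 1 (ℝ × ℝ))) (p q : WithLp 1 (ℝ × ℝ))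
    (g : ℝ → WithLp 1 (ℝ × ℝ)) : Prop :=
  ContinuousOn g (Icc 0 1) ∧ g 0 = p ∧ g 1 = q ∧ ∀ x ∈ Icc (0:ℝ) 1, g x ∈ S

/-- The intrinsic `L1` distance in `S`: the infimum of the `L1` lengths (total variations)
of all paths in `S` from `p` to `q` (infinity if there is no such path). -/
def dS (S : Set (WithLp 1 (ℝ × ℝ))) (p q : WithLp 1 (ℝ × ℝ)) : ENNReal :=
  ⨅ (g : ℝ → WithLp 1 (ℝ × ℝ)) (_ : IsPathIn S p q g), eVariationOn g (Icc 0 1)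

/-! The staircase is admissible, and the intrinsic distance is subadditive (concatenate paths)
and bounded by the `L1` distance along any segment inside `S`; this gives the upper bound.
Conversely every path passes through some point `c` at height `≤ h`, so its length is at least
`‖a - c‖₁ + ‖c - b‖₁ ≥ |ax - bx| + (ay - h) + (by - h)`. -/

theorem eVariationOn.edist_add_edist_le {α E : Type*} [LinearOrder α] [PseudoEMetricSpace E]
    (f : α → E) {a b c : α} (hab : a ≤ b) (hbc : b ≤ c) :
    edist (f a) (f b) + edist (f b) (f c) ≤ eVariationOn f (Icc a c) := by
  have hsplit := eVariationOn.Icc_add_Icc f (s := univ) hab hbc (mem_univ b)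
  simp only [univ_inter] at hsplit
  rw [← hsplit]
  exact add_le_add (eVariationOn.edist_le f (left_mem_Icc.2 hab) (right_mem_Icc.2 hab))
    (eVariationOn.edist_le f (left_mem_Icc.2 hbc) (right_mem_Icc.2 hbc))

theorem eVariationOn_lineMap_le {E : Type*} [SeminormedAddCommGroup E] [NormedSpace ℝ E]
    (p q : E) : eVariationOn (AffineMap.lineMap p q : ℝ → E) (Icc 0 1) ≤ edist p q := by
  calc eVariationOn (AffineMap.lineMap p q : ℝ → E) (Icc 0 1)
      ≤ nndist p q * eVariationOn id (Icc (0 : ℝ) 1) :=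
        (lipschitzWith_lineMap p q).lipschitzOnWith.comp_eVariationOn_le (mapsTo_id _)
    _ = nndist p q * ENNReal.ofReal (id 1 - id 0) := by
        rw [← (monotoneOn_id (s := univ)).eVariationOn_eq (mem_univ 0) (mem_univ 1), univ_inter]
    _ = edist p q := by rw [id, id, sub_zero, ENNReal.ofReal_one, mul_one, edist_nndist]

def joinPaths {E : Type*} (g₁ g₂ : ℝ → E) (t : ℝ) : E :=
  if t ≤ 1 / 2 then g₁ (2 * t) else g₂ (2 * t - 1)

section joinPaths

variable {E : Type*} {g₁ g₂ : ℝ → E}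

theorem eqOn_joinPaths_left : EqOn (joinPaths g₁ g₂) (g₁ ∘ (2 * ·)) (Icc 0 (1 / 2)) :=
  fun _ ht ↦ if_pos ht.2

theorem eqOn_joinPaths_right (h : g₁ 1 = g₂ 0) :
    EqOn (joinPaths g₁ g₂) (g₂ ∘ (2 * · - 1)) (Icc (1 / 2) 1) := by
  intro t ht
  rcases ht.1.eq_or_lt with rfl | hlt
  · simp [joinPaths, h]
  · exact if_neg hlt.not_ge

theorem image_two_mul_Icc : (2 * ·) '' Icc (0 : ℝ) (1 / 2) = Icc 0 1 := by
  rw [image_mul_left_Icc zero_le_two (by norm_num)]; norm_num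

theorem image_two_mul_sub_one_Icc : (2 * · - 1) '' Icc (1 / 2 : ℝ) 1 = Icc 0 1 := by
  simp_rw [sub_eq_add_neg]
  rw [image_affine_Icc' two_pos]; norm_num

theorem eVariationOn_joinPaths [PseudoEMetricSpace E] (h : g₁ 1 = g₂ 0) :
    eVariationOn (joinPaths g₁ g₂) (Icc 0 1) =
      eVariationOn g₁ (Icc 0 1) + eVariationOn g₂ (Icc 0 1) := by
  have hsplit := eVariationOn.Icc_add_Icc (joinPaths g₁ g₂) (s := univ)
    (by norm_num : (0 : ℝ) ≤ 1 / 2) (by norm_num : (1 / 2 : ℝ) ≤ 1) (mem_univ _)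
  simp only [univ_inter] at hsplit
  rw [← hsplit, eVariationOn.eq_of_eqOn eqOn_joinPaths_left,
    eVariationOn.eq_of_eqOn (eqOn_joinPaths_right h),
    eVariationOn.comp_eq_of_monotoneOn _ _ (fun x _ y _ hxy ↦ by linarith),
    eVariationOn.comp_eq_of_monotoneOn _ _ (fun x _ y _ hxy ↦ by linarith),
    image_two_mul_Icc, image_two_mul_sub_one_Icc]

theorem continuousOn_joinPaths [TopologicalSpace E] (h₁ : ContinuousOn g₁ (Icc 0 1))
    (h₂ : ContinuousOn g₂ (Icc 0 1)) (h : g₁ 1 = g₂ 0) :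
    ContinuousOn (joinPaths g₁ g₂) (Icc 0 1) := by
  have hleft : ContinuousOn (joinPaths g₁ g₂) (Icc 0 (1 / 2)) :=
    (h₁.comp (continuous_const_mul 2).continuousOn
      (image_two_mul_Icc ▸ mapsTo_image _ _)).congr eqOn_joinPaths_left
  have hright : ContinuousOn (joinPaths g₁ g₂) (Icc (1 / 2) 1) :=
    (h₂.comp ((continuous_const_mul 2).sub continuous_const).continuousOn
      (image_two_mul_sub_one_Icc ▸ mapsTo_image _ _)).congr (eqOn_joinPaths_right h)
  rw [← Icc_union_Icc_eq_Icc (by norm_num : (0 : ℝ) ≤ 1 / 2) (by norm_num)]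
  exact hleft.union_of_isClosed hright isClosed_Icc isClosed_Icc

end joinPaths

namespace IsPathIn

variable {S : Set (WithLp 1 (ℝ × ℝ))} {p q r : WithLp 1 (ℝ × ℝ)}
  {g₁ g₂ : ℝ → WithLp 1 (ℝ × ℝ)}

theorem lineMap (h : segment ℝ p q ⊆ S) : IsPathIn S p q (AffineMap.lineMap p q) :=
  ⟨AffineMap.lineMap_continuous.continuousOn, AffineMap.lineMap_apply_zero p q,
    AffineMap.lineMap_apply_one p q, fun _ ht ↦ h (lineMap_mem_segment ℝ p q ht)⟩

theorem join (h₁ : IsPathIn S p q g₁) (h₂ : IsPathIn S q r g₂) :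
    IsPathIn S p r (joinPaths g₁ g₂) := by
  obtain ⟨hcont₁, hstart₁, hend₁, hmem₁⟩ := h₁
  obtain ⟨hcont₂, hstart₂, hend₂, hmem₂⟩ := h₂
  have hmeet : g₁ 1 = g₂ 0 := hend₁.trans hstart₂.symm
  refine ⟨continuousOn_joinPaths hcont₁ hcont₂ hmeet, by simp [joinPaths, hstart₁],
    by norm_num [joinPaths, hend₂], fun t ht ↦ ?_⟩
  rcases le_total t (1 / 2) with hle | hge
  · rw [eqOn_joinPaths_left ⟨ht.1, hle⟩]
    exact hmem₁ _ ⟨by linarith [ht.1], by linarith⟩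
  · rw [eqOn_joinPaths_right hmeet ⟨hge, ht.2⟩]
    exact hmem₂ _ ⟨by linarith, by linarith [ht.2]⟩

end IsPathIn

section dS

variable {S : Set (WithLp 1 (ℝ × ℝ))} {p q r : WithLp 1 (ℝ × ℝ)}

theorem dS_le_eVariationOn {g : ℝ → WithLp 1 (ℝ × ℝ)} (hg : IsPathIn S p q g) :
    dS S p q ≤ eVariationOn g (Icc 0 1) :=
  iInf₂_le g hg

theorem dS_le_edist_of_segment_subset (h : segment ℝ p q ⊆ S) : dS S p q ≤ edist p q :=
  (dS_le_eVariationOn (IsPathIn.lineMap h)).trans (eVariationOn_lineMap_le p q)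

theorem dS_triangle : dS S p r ≤ dS S p q + dS S q r :=
  ENNReal.le_iInf₂_add_iInf₂ fun _ h₁ _ h₂ ↦ by
    rw [← eVariationOn_joinPaths (h₁.2.2.1.trans h₂.2.1.symm)]
    exact dS_le_eVariationOn (h₁.join h₂)

end dS

def verticalFoot (p : WithLp 1 (ℝ × ℝ)) (h : ℝ) : WithLp 1 (ℝ × ℝ) :=
  (WithLp.equiv 1 (ℝ × ℝ)).symm (p.ofLp.1, h)

def staircaseLength (a b : WithLp 1 (ℝ × ℝ)) (h : ℝ) : ℝ :=
  |a.ofLp.1 - b.ofLp.1| + (a.ofLp.2 - h) + (b.ofLp.2 - h)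

section staircase

variable {S : Set (WithLp 1 (ℝ × ℝ))} {a b c : WithLp 1 (ℝ × ℝ)} {h : ℝ}

theorem dist_L1_eq_abs_add_abs (x y : WithLp 1 (ℝ × ℝ)) :
    dist x y = |x.ofLp.1 - y.ofLp.1| + |x.ofLp.2 - y.ofLp.2| := by
  rw [WithLp.prod_dist_eq_of_L1, Real.dist_eq, Real.dist_eq]; rfl

theorem staircaseLength_le_dist_add_dist (hc : c.ofLp.2 ≤ h) :
    staircaseLength a b h ≤ dist a c + dist c b := by
  rw [staircaseLength, dist_L1_eq_abs_add_abs, dist_L1_eq_abs_add_abs]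
  have hx := abs_sub_le a.ofLp.1 c.ofLp.1 b.ofLp.1
  have hya := le_abs_self (a.ofLp.2 - c.ofLp.2)
  have hyb := neg_le_abs (c.ofLp.2 - b.ofLp.2)
  linarith

theorem edist_verticalFoot_add_edist_add_edist (hha : h ≤ a.ofLp.2) (hhb : h ≤ b.ofLp.2) :
    edist a (verticalFoot a h) + edist (verticalFoot a h) (verticalFoot b h)
      + edist (verticalFoot b h) b = ENNReal.ofReal (staircaseLength a b h) := by
  have hdown : dist a (verticalFoot a h) = a.ofLp.2 - h := by
    simpa [dist_L1_eq_abs_add_abs, verticalFoot] using hha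
  have hacross : dist (verticalFoot a h) (verticalFoot b h) = |a.ofLp.1 - b.ofLp.1| := by
    simp [dist_L1_eq_abs_add_abs, verticalFoot]
  have hup : dist (verticalFoot b h) b = b.ofLp.2 - h := by
    simpa [dist_L1_eq_abs_add_abs, verticalFoot, abs_sub_comm h] using hhb
  rw [edist_dist, edist_dist, edist_dist, hdown, hacross, hup,
    ← ENNReal.ofReal_add (sub_nonneg.2 hha) (abs_nonneg _),
    ← ENNReal.ofReal_add (by positivity) (sub_nonneg.2 hhb), staircaseLength,
    add_comm (a.ofLp.2 - h)]

theorem ofReal_staircaseLength_le_eVariationOn {g : ℝ → WithLp 1 (ℝ × ℝ)}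
    (hg : ∃ t ∈ Icc (0 : ℝ) 1, (g t).ofLp.2 ≤ h) :
    ENNReal.ofReal (staircaseLength (g 0) (g 1) h) ≤ eVariationOn g (Icc 0 1) := by
  obtain ⟨t, ht, hgt⟩ := hg
  calc ENNReal.ofReal (staircaseLength (g 0) (g 1) h)
      ≤ ENNReal.ofReal (dist (g 0) (g t) + dist (g t) (g 1)) :=
        ENNReal.ofReal_le_ofReal (staircaseLength_le_dist_add_dist hgt)
    _ = edist (g 0) (g t) + edist (g t) (g 1) := by
        rw [ENNReal.ofReal_add dist_nonneg dist_nonneg, edist_dist, edist_dist]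
    _ ≤ eVariationOn g (Icc 0 1) := eVariationOn.edist_add_edist_le g ht.1 ht.2

theorem dS_le_staircaseLength (hha : h ≤ a.ofLp.2) (hhb : h ≤ b.ofLp.2)
    (hdown : segment ℝ a (verticalFoot a h) ⊆ S)
    (hacross : segment ℝ (verticalFoot a h) (verticalFoot b h) ⊆ S)
    (hup : segment ℝ (verticalFoot b h) b ⊆ S) :
    dS S a b ≤ ENNReal.ofReal (staircaseLength a b h) :=
  calc dS S a b ≤ dS S a (verticalFoot a h) + dS S (verticalFoot a h) (verticalFoot b h)
        + dS S (verticalFoot b h) b :=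
      dS_triangle.trans (add_le_add dS_triangle le_rfl)
    _ ≤ edist a (verticalFoot a h) + edist (verticalFoot a h) (verticalFoot b h)
        + edist (verticalFoot b h) b := by
      gcongr <;> exact dS_le_edist_of_segment_subset ‹_›
    _ = ENNReal.ofReal (staircaseLength a b h) :=
      edist_verticalFoot_add_edist_add_edist hha hhb

theorem ofReal_staircaseLength_le_dS
    (hsep : ∀ g, IsPathIn S a b g → ∃ t ∈ Icc (0 : ℝ) 1, (g t).ofLp.2 ≤ h) :
    ENNReal.ofReal (staircaseLength a b h) ≤ dS S a b :=
  le_iInf₂ fun g hg ↦ by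
    simpa only [hg.2.1, hg.2.2.1] using ofReal_staircaseLength_le_eVariationOn (hsep g hg)

end staircase

theorem staircase_path_shortest_general (S : Set (WithLp 1 (ℝ × ℝ)))
    (a b : WithLp 1 (ℝ × ℝ))
    (h : ℝ) (hha : h ≤ a.ofLp.2) (hhb : h ≤ b.ofLp.2)
    (hseg1 : segment ℝ a ((WithLp.equiv 1 (ℝ × ℝ)).symm (a.ofLp.1, h)) ⊆ S)
    (hseg2 : segment ℝ ((WithLp.equiv 1 (ℝ × ℝ)).symm (a.ofLp.1, h))
        ((WithLp.equiv 1 (ℝ × ℝ)).symm (b.ofLp.1, h)) ⊆ S)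
    (hseg3 : segment ℝ ((WithLp.equiv 1 (ℝ × ℝ)).symm (b.ofLp.1, h)) b ⊆ S)
    (hsep : ∀ g : ℝ → WithLp 1 (ℝ × ℝ), IsPathIn S a b g →
      ∃ c ∈ Icc (0:ℝ) 1, (g c).ofLp.2 ≤ h) :
    dS S a b = ENNReal.ofReal (|a.ofLp.1 - b.ofLp.1| + (a.ofLp.2 - h) + (b.ofLp.2 - h)) := by
  exact le_antisymm (dS_le_staircaseLength hha hhb hseg1 hseg2 hseg3)
    (ofReal_staircaseLength_le_dS hsep)

theorem staircase_path_shortest (S : Set (WithLp 1 (ℝ × ℝ)))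
    (a b : WithLp 1 (ℝ × ℝ)) (ha : a ∈ S) (hb : b ∈ S)
    (h : ℝ) (hha : h ≤ a.ofLp.2) (hhb : h ≤ b.ofLp.2)
    (hseg1 : segment ℝ a ((WithLp.equiv 1 (ℝ × ℝ)).symm (a.ofLp.1, h)) ⊆ S)
    (hseg2 : segment ℝ ((WithLp.equiv 1 (ℝ × ℝ)).symm (a.ofLp.1, h))
        ((WithLp.equiv 1 (ℝ × ℝ)).symm (b.ofLp.1, h)) ⊆ S)
    (hseg3 : segment ℝ ((WithLp.equiv 1 (ℝ × ℝ)).symm (b.ofLp.1, h)) b ⊆ S)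
    (hsep : ∀ g : ℝ → WithLp 1 (ℝ × ℝ), IsPathIn S a b g →
      ∃ c ∈ Icc (0:ℝ) 1, (g c).ofLp.2 ≤ h) :
    dS S a b = ENNReal.ofReal (|a.ofLp.1 - b.ofLp.1| + (a.ofLp.2 - h) + (b.ofLp.2 - h)) :=
  staircase_path_shortest_general S a b h hha hhb hseg1 hseg2 hseg3 hsep
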